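/- Let H₀ be a closed subspace of a Hilbert space H and {e_i : i ∈ I} a family of vectors in H. Then {e_i} is a normalized tight frame for H₀ if and only if for every vector v ∈ H, ∑_{i∈I} |⟨v, e_i⟩|² = ‖P_{H₀} v‖². (Note: the vectors e_i are not assumed to lie in H₀; this follows from the identity.) -/

import Mathlib

noncomputable section
open scoped ComplexInnerProductSpace ENNReal
open MeasureTheory

variable {H : Type*} [NormedAddCommGroup H] [InnerProductSpace ℂ H] [CompleteSpace H]

/-- The orthogonal projection onto `K`, as an endomorphism of `H`. -/
def projCLM (K : Submodule ℂ H) [K.HasOrthogonalProjection] : H →L[ℂ] H :=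
  K.subtypeL.comp (K.orthogonalProjectionOnto)

/-- The rank-one operator `P_f : v ↦ ⟨v,f⟩f` (inner product linear in `v`). -/
def rankOne (f : H) : H →L[ℂ] H := (innerSL ℂ f).smulRight f

/-- The trace of `T ∘ P` (`P` an orthogonal projection), computed as
`Trace (P T P) = ∑ᵢ ⟨T P bᵢ, P bᵢ⟩` over an orthonormal basis `b`. -/
def traceIn {ι : Type*} (b : HilbertBasis ι ℂ H) (T P : H →L[ℂ] H) : ℝ≥0∞ :=
  ∑' i, ENNReal.ofReal (⟪T (P (b i)), P (b i)⟫).re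

/-- `e` is a normalized tight frame for the subspace `K`. -/
def IsNTF {ι : Type*} (e : ι → H) (K : Submodule ℂ H) : Prop :=
  (∀ i, e i ∈ K) ∧ ∀ f ∈ K, ∑' i, ((‖⟪f, e i⟫‖₊ : ℝ≥0∞) ^ 2) = (‖f‖₊ : ℝ≥0∞) ^ 2


/-- A family `e` is a normalized tight frame for the closed subspace `K`
iff `∑ᵢ |⟨v, eᵢ⟩|² = ‖P_K v‖²` for every `v ∈ H` (the `eᵢ` are not assumed to lie in `K`). -/
theorem isNTF_iff_tsum_eq_norm_proj {ι : Type*}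
    (K : Submodule ℂ H) [K.HasOrthogonalProjection] (e : ι → H) :
    IsNTF e K ↔
      ∀ v : H, ∑' i, ((‖⟪v, e i⟫‖₊ : ℝ≥0∞) ^ 2) = (‖projCLM K v‖₊ : ℝ≥0∞) ^ 2 := by

  have key : ∀ (v : H) (w : H), w ∈ K → ⟪v, w⟫ = ⟪(projCLM K v : H), w⟫ := by
    intro v w hw
    have h0 := Submodule.starProjection_inner_eq_zero v w hw
    have : ⟪v - (projCLM K v : H), w⟫ = 0 := h0
    rw [inner_sub_left] at this
    linear_combination this
  constructor
  · rintro ⟨hmem, hsum⟩ v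
    have hPv : (projCLM K v : H) ∈ K := (K.orthogonalProjectionOnto v).2
    have := hsum _ hPv
    rw [← this]
    congr 1
    ext i
    rw [key v (e i) (hmem i)]
  · intro h
    have hmem : ∀ i, e i ∈ K := by
      intro j
      have hperp : e j - (projCLM K (e j) : H) ∈ Kᗮ := Submodule.sub_starProjection_mem_orthogonal (e j)
      set w := e j - (projCLM K (e j) : H) with hw
      have hPw : projCLM K w = 0 := by
        simp only [projCLM, ContinuousLinearMap.coe_comp', Function.comp_apply,
          Submodule.coe_subtypeL', Submodule.coe_subtype]
        rw [Submodule.orthogonalProjectionOnto_apply_of_mem_orthogonal hperp]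
        simp
      have hz := h w
      rw [hPw] at hz
      simp only [nnnorm_zero, ENNReal.coe_zero] at hz
      have hz' : (0:ℝ≥0∞) ^ 2 = 0 := by simp
      rw [hz'] at hz
      have hj : ((‖⟪w, e j⟫‖₊ : ℝ≥0∞) ^ 2) = 0 :=
        le_antisymm (hz ▸ ENNReal.le_tsum j) zero_le
      have hje : ⟪w, e j⟫ = 0 := by
        simpa using hj
      have hjp : ⟪w, (projCLM K (e j) : H)⟫ = 0 :=
        (Submodule.mem_orthogonal' K w).mp hperp _ (K.orthogonalProjectionOnto (e j)).2
      have hww : ⟪w, w⟫ = 0 := by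
        rw [hw, inner_sub_right, hje, hjp, sub_zero]
      have : w = 0 := inner_self_eq_zero.mp hww
      have heq : e j = (projCLM K (e j) : H) := by
        have := sub_eq_zero.mp this
        exact this
      rw [heq]
      exact (K.orthogonalProjectionOnto (e j)).2
    refine ⟨hmem, fun f hf => ?_⟩
    have hPf : (projCLM K f : H) = f := by
      exact Submodule.starProjection_eq_self_iff.mpr hf
    have := h f
    rwa [hPf] at this
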